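/- Let R = K[X_x : x ∈ ℤ] be the polynomial ring on variables X_x indexed by ℤ, and let ℏ ∈ K. For y ∈ ℤ and P ∈ R set d(y,P) = (X_{y-1} - 2·X_y + X_{y+1})·P + ℏ·(∂P/∂X_y). Then the element 3·X₀X₁ - 2·X₋₁X₁ - 2·X₀X₂ + X₋₁X₂ - ℏ·1 lies in the K-linear span of the elements d(y,P) with y ∈ {-1,0,1}; explicitly, it equals d(1, X₋₁) - d(0, X₀) - 2·d(1, X₀). (This is the key cochain-level identity proving that [δ₂-δ₁]⋆[δ₀] - [δ₀]⋆[δ₂-δ₁] = ℏ in the cohomology of the quantum observables, recovering the Weyl relation.) -/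
import Mathlib


open MvPolynomial

/-- The image of the deformed differential `d_ℏ = d + ℏΔ` applied to the
degree `-1` element `δ̄_y·P`:
`d(y,P) = (X_{y-1} - 2X_y + X_{y+1})·P + ℏ·∂P/∂X_y`. -/
noncomputable def dQuantum {K : Type*} [Field K] (ℏ : K) (y : ℤ)
    (P : MvPolynomial ℤ K) : MvPolynomial ℤ K :=
  (X (y - 1) - 2 * X y + X (y + 1)) * P + C ℏ * pderiv y P

/-- The key cochain-level identity recovering the Weyl relation: the element
`3X₀X₁ - 2X₋₁X₁ - 2X₀X₂ + X₋₁X₂ - ℏ` is a boundary, explicitly equal to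
`d(1, X₋₁) - d(0, X₀) - 2·d(1, X₀)`, hence lies in the span of the `d(y,P)`
with `y ∈ {-1,0,1}`. -/
theorem weyl_relation_cochain_identity
    {K : Type*} [Field K] [CharZero K] (ℏ : K) :
    (3 * X 0 * X 1 - 2 * X (-1) * X 1 - 2 * X 0 * X 2 + X (-1) * X 2 - C ℏ :
        MvPolynomial ℤ K) =
      dQuantum ℏ 1 (X (-1)) - dQuantum ℏ 0 (X 0) - 2 * dQuantum ℏ 1 (X 0) ∧
    (3 * X 0 * X 1 - 2 * X (-1) * X 1 - 2 * X 0 * X 2 + X (-1) * X 2 - C ℏ :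
        MvPolynomial ℤ K) ∈
      Submodule.span K
        {r : MvPolynomial ℤ K |
          ∃ y ∈ ({-1, 0, 1} : Set ℤ), ∃ P, r = dQuantum ℏ y P} := by
  have heq : (3 * X 0 * X 1 - 2 * X (-1) * X 1 - 2 * X 0 * X 2 + X (-1) * X 2 - C ℏ :
        MvPolynomial ℤ K) =
      dQuantum ℏ 1 (X (-1)) - dQuantum ℏ 0 (X 0) - 2 * dQuantum ℏ 1 (X 0) := by
    simp only [dQuantum, pderiv_X, Pi.single_apply]
    norm_num
    ring
  refine ⟨heq, ?_⟩
  rw [heq]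
  have hmem : ∀ y ∈ ({-1, 0, 1} : Set ℤ), ∀ P : MvPolynomial ℤ K,
      dQuantum ℏ y P ∈ Submodule.span K
        {r : MvPolynomial ℤ K |
          ∃ y ∈ ({-1, 0, 1} : Set ℤ), ∃ P, r = dQuantum ℏ y P} := by
    intro y hy P
    exact Submodule.subset_span ⟨y, hy, P, rfl⟩
  have h1 := hmem 1 (by simp) (X (-1))
  have h0 := hmem 0 (by simp) (X 0)
  have h2 := hmem 1 (by simp) (X 0)
  have : (2 : MvPolynomial ℤ K) * dQuantum ℏ 1 (X 0) = (2 : K) • dQuantum ℏ 1 (X 0) := by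
    rw [smul_eq_C_mul, map_ofNat]
  rw [this]
  exact sub_mem (sub_mem h1 h0) (Submodule.smul_mem _ _ h2)
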